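/- Let H be a real symmetric 2^n × 2^n matrix, indexed by x, y ∈ {0,1}^n, whose off-diagonal entries are nonpositive (H_{xy} ≤ 0 for all x ≠ y), and let Π be the orthogonal projector onto the eigenspace of the smallest eigenvalue of H. Then this ground eigenspace contains a nonzero vector with all entries nonnegative, and consequently ⟨+|Π|+⟩ ≥ 2^(−n), i.e. η = √(⟨+|Π|+⟩) ≥ 2^(−n/2). -/

import Mathlib

open scoped BigOperators

namespace StoqPaper

/-- The real value (0 or 1) of a bit. -/
def bv (b : Bool) : ℝ := if b then 1 else 0

/-- The ℓ² norm of a finitely-indexed family of complex numbers. -/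
noncomputable def l2norm {α : Type*} [Fintype α] (v : α → ℂ) : ℝ :=
  Real.sqrt (∑ x, Complex.normSq (v x))

/-- The inner product ⟨v|w⟩ (antilinear in the first slot). -/
noncomputable def qInner {α : Type*} [Fintype α] (v w : α → ℂ) : ℂ :=
  ∑ x, (starRingEnd ℂ) (v x) * w x

/-- `‖M‖_op ≤ J` for the ℓ²-operator norm, stated via its universal property. -/
def OpNormLE {α : Type*} [Fintype α] (M : Matrix α α ℂ) (J : ℝ) : Prop :=
  ∀ v : α → ℂ, l2norm (M.mulVec v) ≤ J * l2norm v

/-- The uniform superposition state |+⟩ on qubits indexed by `ι`. -/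
noncomputable def plusState (ι : Type*) [Fintype ι] : (ι → Bool) → ℂ :=
  fun _ => ((Real.sqrt (2 ^ Fintype.card ι) : ℝ)⁻¹ : ℝ)

variable {ι : Type*} [Fintype ι] [DecidableEq ι]

/-- A matrix on qubits indexed by `ι` acts nontrivially only on the qubit set `S`:
entries vanish unless the two configurations agree outside `S`, and entries depend
only on the restrictions of the two configurations to `S`. -/
def LocalOn (S : Finset ι) (M : Matrix (ι → Bool) (ι → Bool) ℂ) : Prop :=
  (∀ x y : ι → Bool, (∃ i, i ∉ S ∧ x i ≠ y i) → M x y = 0) ∧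
  (∀ x y x' y' : ι → Bool, (∀ i ∈ S, x i = x' i) → (∀ i ∈ S, y i = y' i) →
    (∀ i, i ∉ S → x i = y i) → (∀ i, i ∉ S → x' i = y' i) → M x y = M x' y')

/-- A matrix is `k`-local if it acts nontrivially on at most `k` qubits. -/
def KLocal (k : ℕ) (M : Matrix (ι → Bool) (ι → Bool) ℂ) : Prop :=
  ∃ S : Finset ι, S.card ≤ k ∧ LocalOn S M

/-- A `k`-local matrix all of whose local-matrix entries are real and strictly positive. -/
def KLocalPositive (k : ℕ) (M : Matrix (ι → Bool) (ι → Bool) ℂ) : Prop :=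
  ∃ S : Finset ι, S.card ≤ k ∧ LocalOn S M ∧
    ∀ x y : ι → Bool, (∀ i, i ∉ S → x i = y i) → (M x y).im = 0 ∧ 0 < (M x y).re

/-- Stoquastic entries: all entries real, and off-diagonal entries nonpositive. -/
def StoqEntries (M : Matrix (ι → Bool) (ι → Bool) ℂ) : Prop :=
  ∀ x y : ι → Bool, (M x y).im = 0 ∧ (x ≠ y → (M x y).re ≤ 0)

/-- `μ` is a (real) eigenvalue of `M`. -/
def IsEig {α : Type*} [Fintype α] (M : Matrix α α ℂ) (μ : ℝ) : Prop :=
  ∃ v : α → ℂ, v ≠ 0 ∧ M.mulVec v = (μ : ℂ) • v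

/-- `E` is the smallest (real) eigenvalue of `M` (the ground energy). -/
def IsGroundEnergy {α : Type*} [Fintype α] (M : Matrix α α ℂ) (E : ℝ) : Prop :=
  IsEig M E ∧ ∀ μ : ℝ, IsEig M μ → E ≤ μ

/-- Every eigenvalue of `M` is either the ground energy `E` or at least `E + Δ`:
the energy gap of `M` is at least `Δ`. -/
def GapAtLeast {α : Type*} [Fintype α] (M : Matrix α α ℂ) (E Δ : ℝ) : Prop :=
  ∀ μ : ℝ, IsEig M μ → μ = E ∨ E + Δ ≤ μ

/-- `P` is the orthogonal projector onto the `E`-eigenspace of `M`: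
it is Hermitian, idempotent, and its fixed space is exactly that eigenspace. -/
def IsGroundProjector {α : Type*} [Fintype α] (M P : Matrix α α ℂ) (E : ℝ) : Prop :=
  P.IsHermitian ∧ P * P = P ∧
    ∀ v : α → ℂ, M.mulVec v = (E : ℂ) • v ↔ P.mulVec v = v

/-- A function of bit configurations depends only on the bits in `S`. -/
def DependsOnlyOn (S : Finset ι) (f : (ι → Bool) → ℝ) : Prop :=
  ∀ y y' : ι → Bool, (∀ i ∈ S, y i = y' i) → f y = f y'

/-- The Gibbs distribution (at temperature 1) of a classical Hamiltonian. -/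
noncomputable def gibbs (Hc : (ι → Bool) → ℝ) (y : ι → Bool) : ℝ :=
  Real.exp (-(Hc y)) / ∑ z, Real.exp (-(Hc z))

/-- Total variation distance between two real functions on a finite set. -/
noncomputable def tvDist {α : Type*} [Fintype α] (p q : α → ℝ) : ℝ :=
  (1 / 2) * ∑ x, |p x - q x|

/-- A Hyper Boltzmann Machine with `n` visible nodes, `m` hidden nodes
and `T` hyperedges. -/
structure HBM (n m T : ℕ) where
  /-- the set of nodes of each hyperedge -/
  edge : Fin T → Finset (Fin n ⊕ Fin m)
  /-- the local energy of each hyperedge -/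
  F : Fin T → ((Fin n ⊕ Fin m) → Bool) → ℝ
  /-- each local energy depends only on the bits at the nodes of its hyperedge -/
  F_local : ∀ t, DependsOnlyOn (edge t) (F t)

namespace HBM

variable {n m T : ℕ}

/-- An HBM is `k`-local if every hyperedge contains at most `k` nodes. -/
def IsKLocal (M : HBM n m T) (k : ℕ) : Prop := ∀ t, (M.edge t).card ≤ k

/-- The number of hyperedges containing a given node. -/
def deg (M : HBM n m T) (v : Fin n ⊕ Fin m) : ℕ :=
  (Finset.univ.filter (fun t => v ∈ M.edge t)).card

/-- The output of the HBM: hidden variables summed out of the Boltzmann weight. -/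
noncomputable def output (M : HBM n m T) (x : Fin n → Bool) : ℝ :=
  ∑ h : Fin m → Bool, Real.exp (-(∑ t, M.F t (Sum.elim x h)))

/-- The probability distribution of the HBM on visible configurations. -/
noncomputable def dist (M : HBM n m T) (x : Fin n → Bool) : ℝ :=
  M.output x / ∑ y, M.output y

/-- The HBM represents the state `ψ` to precision `ε` in distribution. -/
noncomputable def RepDist (M : HBM n m T) (ψ : (Fin n → Bool) → ℂ) (ε : ℝ) : Prop :=
  tvDist M.dist (fun x => Complex.normSq (ψ x)) ≤ ε

end HBM

/-- A Deep Boltzmann Machine with `n` visible nodes, `m₁` middle-layer hidden nodes and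
`m₂` deep-layer hidden nodes; edges run only between consecutive layers. -/
structure DBM (n m₁ m₂ : ℕ) where
  /-- biases of the visible nodes -/
  a : Fin n → ℝ
  /-- biases of the middle hidden nodes -/
  b : Fin m₁ → ℝ
  /-- biases of the deep hidden nodes -/
  c : Fin m₂ → ℝ
  /-- weights between visible and middle layers -/
  W : Fin n → Fin m₁ → ℝ
  /-- weights between middle and deep layers -/
  U : Fin m₁ → Fin m₂ → ℝ

namespace DBM

variable {n m₁ m₂ : ℕ}

/-- The energy of a configuration of a DBM. -/
noncomputable def energy (D : DBM n m₁ m₂) (x : Fin n → Bool) (h : Fin m₁ → Bool)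
    (g : Fin m₂ → Bool) : ℝ :=
  -(∑ i, D.a i * bv (x i)) - (∑ j, D.b j * bv (h j)) - (∑ l, D.c l * bv (g l))
    - (∑ i, ∑ j, D.W i j * bv (x i) * bv (h j))
    - (∑ j, ∑ l, D.U j l * bv (h j) * bv (g l))

/-- The output of a DBM. -/
noncomputable def output (D : DBM n m₁ m₂) (x : Fin n → Bool) : ℝ :=
  ∑ h : Fin m₁ → Bool, ∑ g : Fin m₂ → Bool, Real.exp (-(D.energy x h g))

/-- The probability distribution of a DBM on visible configurations. -/
noncomputable def dist (D : DBM n m₁ m₂) (x : Fin n → Bool) : ℝ :=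
  D.output x / ∑ y, D.output y

open Classical in
/-- The number of connections (degree) of a visible node. -/
noncomputable def degVis (D : DBM n m₁ m₂) (i : Fin n) : ℕ :=
  (Finset.univ.filter (fun j => D.W i j ≠ 0)).card

open Classical in
/-- The number of connections (degree) of a middle-layer hidden node. -/
noncomputable def degMid (D : DBM n m₁ m₂) (j : Fin m₁) : ℕ :=
  (Finset.univ.filter (fun i => D.W i j ≠ 0)).card
    + (Finset.univ.filter (fun l => D.U j l ≠ 0)).card

open Classical in
/-- The number of connections (degree) of a deep-layer hidden node. -/
noncomputable def degDeep (D : DBM n m₁ m₂) (l : Fin m₂) : ℕ :=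
  (Finset.univ.filter (fun j => D.U j l ≠ 0)).card

end DBM

/-- A (general) Boltzmann machine on `n` visible and `m` hidden nodes: a graph with
real biases on the nodes and real weights on the edges. -/
structure BM (n m : ℕ) where
  /-- biases -/
  a : (Fin n ⊕ Fin m) → ℝ
  /-- weights (zero weight = no edge) -/
  W : (Fin n ⊕ Fin m) → (Fin n ⊕ Fin m) → ℝ
  /-- weights are symmetric -/
  symm : ∀ u v, W u v = W v u
  /-- no self-loops -/
  diag : ∀ u, W u u = 0

namespace BM

variable {n m : ℕ}

/-- The energy of a configuration of a Boltzmann machine. -/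
noncomputable def energy (B : BM n m) (y : (Fin n ⊕ Fin m) → Bool) : ℝ :=
  -(∑ v, B.a v * bv (y v)) - (1 / 2) * ∑ u, ∑ v, B.W u v * bv (y u) * bv (y v)

/-- The output of a Boltzmann machine. -/
noncomputable def output (B : BM n m) (x : Fin n → Bool) : ℝ :=
  ∑ h : Fin m → Bool, Real.exp (-(B.energy (Sum.elim x h)))

/-- The probability distribution of a Boltzmann machine on visible configurations. -/
noncomputable def dist (B : BM n m) (x : Fin n → Bool) : ℝ :=
  B.output x / ∑ y, B.output y

open Classical in
/-- The number of connections (degree) of a node. -/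
noncomputable def deg (B : BM n m) (v : Fin n ⊕ Fin m) : ℕ :=
  (Finset.univ.filter (fun u => B.W v u ≠ 0)).card

end BM

end StoqPaper

namespace StoqPaper

/-- The bound `η^(−1/2) L^(5/2) J^(3/2) Δ^(−3/2) ε^(−1/2) (log(η⁻¹ε⁻¹))^(3/2)` appearing in the
theorems about general stoquastic Hamiltonians. -/
noncomputable def stoqBound (η L J Δ ε : ℝ) : ℝ :=
  η ^ (-(1 : ℝ) / 2) * L ^ ((5 : ℝ) / 2) * J ^ ((3 : ℝ) / 2) * Δ ^ (-(3 : ℝ) / 2) *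
    ε ^ (-(1 : ℝ) / 2) * Real.log (η⁻¹ * ε⁻¹) ^ ((3 : ℝ) / 2)

/-- The bound `L³ J Δ⁻¹ log(η⁻¹ε⁻¹)` appearing in the theorems about stoquastic
frustration-free Hamiltonians. -/
noncomputable def sffBound (L J Δ η ε : ℝ) : ℝ :=
  L ^ (3 : ℕ) * J * Δ⁻¹ * Real.log (η⁻¹ * ε⁻¹)

/-- The marginal of a distribution on `n + m` bits onto the first `n` bits. -/
noncomputable def marginalFst {n m : ℕ} (p : ((Fin n ⊕ Fin m) → Bool) → ℝ)
    (x : Fin n → Bool) : ℝ :=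
  ∑ h : Fin m → Bool, p (Sum.elim x h)

end StoqPaper

open StoqPaper

/-!
Shift `H` by its ground energy: `A = H - E₀ • 1` is positive semidefinite and its kernel is the
ground space. Because the off-diagonal entries of `A` are nonpositive, replacing a ground vector
`v` by `|v|` can only lower the quadratic form `v ⬝ᵥ A *ᵥ v`, which is already `0`, its minimum;
hence `|v|` lies in the kernel too. For a nonnegative ground vector `w`, Cauchy–Schwarz gives
`(w ⬝ᵥ u)² ≤ ‖w‖² ⟨u|Π|u⟩`, and for `u = |+⟩` the left side is `2⁻ⁿ (∑ w)² ≥ 2⁻ⁿ ‖w‖²`.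
-/

open scoped Matrix

namespace Matrix

variable {ι : Type*} [Fintype ι]

lemma abs_dotProduct_mulVec_abs_le {A : Matrix ι ι ℝ} (hA : ∀ x y, x ≠ y → A x y ≤ 0)
    (v : ι → ℝ) : |v| ⬝ᵥ A *ᵥ |v| ≤ v ⬝ᵥ A *ᵥ v := by
  simp only [dotProduct, mulVec, Finset.mul_sum]
  refine Finset.sum_le_sum fun x _ => Finset.sum_le_sum fun y _ => ?_
  simp only [Pi.abs_apply]
  rcases eq_or_ne x y with rfl | hxy
  · rw [mul_left_comm, abs_mul_abs_self, mul_left_comm]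
  · calc |v x| * (A x y * |v y|) = A x y * |v x * v y| := by rw [abs_mul]; ring
      _ ≤ A x y * (v x * v y) := mul_le_mul_of_nonpos_left (le_abs_self _) (hA x y hxy)
      _ = v x * (A x y * v y) := by ring

lemma PosSemidef.mulVec_abs_eq_zero {A : Matrix ι ι ℝ} (hA : A.PosSemidef)
    (hoff : ∀ x y, x ≠ y → A x y ≤ 0) {v : ι → ℝ} (hv : A *ᵥ v = 0) : A *ᵥ |v| = 0 := by
  refine (hA.dotProduct_mulVec_zero_iff |v|).mp (le_antisymm ?_ ?_)
  · simpa [hv] using abs_dotProduct_mulVec_abs_le hoff v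
  · simpa using hA.dotProduct_mulVec_nonneg |v|

lemma IsSymm.dotProduct_mulVec_comm {P : Matrix ι ι ℝ} (hP : P.IsSymm) (u v : ι → ℝ) :
    u ⬝ᵥ P *ᵥ v = P *ᵥ u ⬝ᵥ v := by
  rw [dotProduct_mulVec, ← mulVec_transpose, hP.eq]

lemma IsSymm.sq_dotProduct_le_of_mul_self_eq {P : Matrix ι ι ℝ} (hP : P.IsSymm)
    (hPP : P * P = P) {w : ι → ℝ} (hw : P *ᵥ w = w) (u : ι → ℝ) :
    (w ⬝ᵥ u) ^ 2 ≤ (w ⬝ᵥ w) * (u ⬝ᵥ P *ᵥ u) := by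
  have hwu : w ⬝ᵥ u = w ⬝ᵥ P *ᵥ u := by rw [hP.dotProduct_mulVec_comm, hw]
  have huPu : u ⬝ᵥ P *ᵥ u = P *ᵥ u ⬝ᵥ P *ᵥ u := by
    rw [← hP.dotProduct_mulVec_comm, mulVec_mulVec, hPP]
  rw [hwu, huPu]
  simpa only [dotProduct, sq] using Finset.sum_mul_sq_le_sq_mul_sq Finset.univ w (P *ᵥ u)

lemma IsSymm.sq_le_dotProduct_mulVec_const {P : Matrix ι ι ℝ} (hP : P.IsSymm)
    (hPP : P * P = P) {w : ι → ℝ} (hw0 : w ≠ 0) (hw : ∀ x, 0 ≤ w x) (hPw : P *ᵥ w = w)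
    (c : ℝ) : c ^ 2 ≤ (fun _ => c) ⬝ᵥ P *ᵥ (fun _ => c) := by
  have hww : 0 < w ⬝ᵥ w :=
    lt_of_le_of_ne (dotProduct_self_star_nonneg w) (Ne.symm (dotProduct_self_eq_zero.not.mpr hw0))
  have hsum : w ⬝ᵥ w ≤ (∑ x, w x) ^ 2 := by
    simpa only [dotProduct, sq] using Finset.sum_sq_le_sq_sum_of_nonneg fun x _ => hw x
  have hwc : w ⬝ᵥ (fun _ => c) = (∑ x, w x) * c := by simp [dotProduct, Finset.sum_mul]
  have hCS := hP.sq_dotProduct_le_of_mul_self_eq hPP hPw (fun _ => c)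
  rw [hwc, mul_pow] at hCS
  refine le_of_mul_le_mul_left ?_ hww
  calc w ⬝ᵥ w * c ^ 2 ≤ (∑ x, w x) ^ 2 * c ^ 2 := by gcongr
    _ ≤ _ := hCS

variable [DecidableEq ι]

lemma IsSymm.posSemidef_sub_smul_one {H : Matrix ι ι ℝ} (hH : H.IsSymm) {E : ℝ}
    (hE : ∀ μ : ℝ, (∃ v : ι → ℝ, v ≠ 0 ∧ H *ᵥ v = μ • v) → E ≤ μ) :
    (H - E • 1).PosSemidef := by
  have hA : (H - E • 1).IsHermitian := by
    rw [isHermitian_iff_isSymm]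
    simp only [IsSymm, transpose_sub, hH.eq, transpose_smul, transpose_one]
  refine hA.posSemidef_iff_eigenvalues_nonneg.mpr fun i => ?_
  let b : ι → ℝ := hA.eigenvectorBasis i
  have hb : b ≠ 0 := fun h =>
    hA.eigenvectorBasis.orthonormal.ne_zero i (by ext j; exact congrFun h j)
  have hHb : H *ᵥ b = (hA.eigenvalues i + E) • b := by
    have := hA.mulVec_eigenvectorBasis i
    rw [sub_mulVec, smul_mulVec, one_mulVec, sub_eq_iff_eq_add] at this
    rw [add_smul, ← this]
  simpa using hE _ ⟨b, hb, hHb⟩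

lemma IsSymm.exists_nonneg_ground_vector {H : Matrix ι ι ℝ} (hH : H.IsSymm)
    (hoff : ∀ x y, x ≠ y → H x y ≤ 0) {E : ℝ}
    (hE : (∃ v : ι → ℝ, v ≠ 0 ∧ H *ᵥ v = E • v) ∧
      ∀ μ : ℝ, (∃ v : ι → ℝ, v ≠ 0 ∧ H *ᵥ v = μ • v) → E ≤ μ) :
    ∃ w : ι → ℝ, w ≠ 0 ∧ H *ᵥ w = E • w ∧ ∀ x, 0 ≤ w x := by
  obtain ⟨⟨v, hv0, hv⟩, hmin⟩ := hE
  have hker : ∀ u, (H - E • 1) *ᵥ u = 0 ↔ H *ᵥ u = E • u := fun u => by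
    rw [sub_mulVec, smul_mulVec, one_mulVec, sub_eq_zero]
  have hoff' : ∀ x y, x ≠ y → (H - E • 1) x y ≤ 0 := fun x y hxy => by
    simpa [one_apply_ne hxy] using hoff x y hxy
  have habs : (H - E • 1) *ᵥ |v| = 0 :=
    (hH.posSemidef_sub_smul_one hmin).mulVec_abs_eq_zero hoff' ((hker v).mpr hv)
  exact ⟨|v|, fun h => hv0 (funext fun x => by simpa using congrFun h x), (hker _).mp habs,
    fun x => abs_nonneg (v x)⟩

end Matrix

theorem statement_19 (n : ℕ) (H P : Matrix ((Fin n) → Bool) ((Fin n) → Bool) ℝ)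
    (hsym : H.IsSymm) (hoff : ∀ x y, x ≠ y → H x y ≤ 0) (E₀ : ℝ)
    (hE₀ : (∃ v : ((Fin n) → Bool) → ℝ, v ≠ 0 ∧ H.mulVec v = E₀ • v) ∧
      ∀ μ : ℝ, (∃ v : ((Fin n) → Bool) → ℝ, v ≠ 0 ∧ H.mulVec v = μ • v) → E₀ ≤ μ)
    (hP : P.IsSymm ∧ P * P = P ∧
      ∀ v : ((Fin n) → Bool) → ℝ, H.mulVec v = E₀ • v ↔ P.mulVec v = v) :
    (∃ v : ((Fin n) → Bool) → ℝ, v ≠ 0 ∧ H.mulVec v = E₀ • v ∧ ∀ x, 0 ≤ v x) ∧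
    ∀ plus : ((Fin n) → Bool) → ℝ, plus = (fun _ => (Real.sqrt (2 ^ n))⁻¹) →
      ((2 : ℝ) ^ n)⁻¹ ≤ dotProduct plus (P.mulVec plus) ∧
      (Real.sqrt (2 ^ n))⁻¹ ≤ Real.sqrt (dotProduct plus (P.mulVec plus)) := by
  obtain ⟨hPsym, hPP, hPfix⟩ := hP
  obtain ⟨w, hw0, hw, hwnn⟩ := hsym.exists_nonneg_ground_vector hoff hE₀
  refine ⟨⟨w, hw0, hw, hwnn⟩, fun plus hplus => ?_⟩
  have hbound : ((2 : ℝ) ^ n)⁻¹ ≤ plus ⬝ᵥ P *ᵥ plus := by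
    have := hPsym.sq_le_dotProduct_mulVec_const hPP hw0 hwnn ((hPfix w).mp hw)
      (Real.sqrt (2 ^ n))⁻¹
    rwa [inv_pow, Real.sq_sqrt (by positivity), ← hplus] at this
  refine ⟨hbound, ?_⟩
  simpa only [Real.sqrt_inv] using Real.sqrt_le_sqrt hbound
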